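/- arXiv:math/0209065 — 4 statements merged into one kernel-verified Lean document; each statement's English description precedes it below -/
import Mathlib

section
/- Let V = (v, w) : ℝ² → ℝ² be a C¹ vector field which is unit (v² + w² ≡ 1) and divergence-free (∂v/∂x + ∂w/∂y ≡ 0). Then the directional derivatives of v and w in the direction of the perpendicular field V⊥ = (w, -v) vanish identically: ⟨∇v, V⊥⟩ ≡ 0 and ⟨∇w, V⊥⟩ ≡ 0. -/
/-!
Differentiating `v² + w² ≡ 1` shows that `DV` takes values in the line `V⊥`, so at each point
`DV = V⊥ ⊗ φ` for some covector `φ`. Its trace `φ(V⊥)` is the divergence, which vanishes;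
hence `DV (V⊥) = φ(V⊥) V⊥ = 0`, i.e. both components of `V` are constant along `V⊥`.
-/

open ContinuousLinearMap

theorem LinearMap.apply_perp_eq_zero_of_trace_eq_zero (L : ℝ × ℝ →ₗ[ℝ] ℝ × ℝ) (u : ℝ × ℝ)
    (horth : ∀ h, u.1 * (L h).1 + u.2 * (L h).2 = 0)
    (htrace : (L (1, 0)).1 + (L (0, 1)).2 = 0) :
    L (u.2, -u.1) = 0 := by
  have hu : (u.2, -u.1) = u.2 • ((1 : ℝ), (0 : ℝ)) + (-u.1) • ((0 : ℝ), (1 : ℝ)) := by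
    ext <;> simp
  have h₁ := horth (1, 0)
  have h₂ := horth (0, 1)
  rw [hu, map_add, map_smul, map_smul]
  ext
  · simp only [Prod.fst_add, Prod.smul_fst, smul_eq_mul, Prod.fst_zero]
    linear_combination u.2 * htrace - h₂
  · simp only [Prod.snd_add, Prod.smul_snd, smul_eq_mul, Prod.snd_zero]
    linear_combination h₁ - u.1 * htrace

theorem fderiv_orthogonal_of_sq_add_sq_eq_const {E : Type*} [NormedAddCommGroup E]
    [NormedSpace ℝ E] {V : E → ℝ × ℝ} {p : E} (hV : DifferentiableAt ℝ V p) (c : ℝ)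
    (hconst : ∀ q, (V q).1 ^ 2 + (V q).2 ^ 2 = c) (h : E) :
    (V p).1 * (fderiv ℝ V p h).1 + (V p).2 * (fderiv ℝ V p h).2 = 0 := by
  have hderiv := (hV.hasFDerivAt.fst.pow 2).add (hV.hasFDerivAt.snd.pow 2)
  rw [show ((fun q => (V q).1 ^ 2) + fun q => (V q).2 ^ 2) = fun _ => c from funext hconst]
    at hderiv
  have happ := congrArg (· h) (hderiv.unique (hasFDerivAt_const c p))
  simp only [add_apply, smul_apply, coe_comp, Function.comp_apply, coe_fst', coe_snd',
    zero_apply, smul_eq_mul] at happ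
  linear_combination happ / 2

/-- A C¹ unit divergence-free planar vector field V = (v,w) has
⟨∇v, V⊥⟩ ≡ 0 and ⟨∇w, V⊥⟩ ≡ 0, where V⊥ = (w, -v). -/
theorem stmt_0 (V : ℝ × ℝ → ℝ × ℝ) (hV : ContDiff ℝ 1 V)
    (hunit : ∀ p, (V p).1 ^ 2 + (V p).2 ^ 2 = 1)
    (hdiv : ∀ p, (fderiv ℝ V p (1, 0)).1 + (fderiv ℝ V p (0, 1)).2 = 0) :
    ∀ p : ℝ × ℝ,
      fderiv ℝ (fun q => (V q).1) p ((V p).2, -(V p).1) = 0 ∧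
      fderiv ℝ (fun q => (V q).2) p ((V p).2, -(V p).1) = 0 := by
  intro p
  have hd : DifferentiableAt ℝ V p := (hV.differentiable one_ne_zero).differentiableAt
  have hperp : fderiv ℝ V p ((V p).2, -(V p).1) = 0 :=
    LinearMap.apply_perp_eq_zero_of_trace_eq_zero (fderiv ℝ V p).toLinearMap (V p)
      (fderiv_orthogonal_of_sq_add_sq_eq_const hd 1 hunit) (hdiv p)
  rw [fderiv.fst hd, fderiv.snd hd]
  exact Prod.ext_iff.mp hperp
end

section
/- Let V : ℝ² → ℝ² be a C¹ unit divergence-free vector field and let L : I → ℝ² be an integral curve of V⊥ = (w, -v) with L(0) = z. Then L(r) = z + r·V⊥(z) for all r in I; in particular, every integral curve of V⊥ is a straight line traversed at unit speed. -/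
/-!
Differentiating `v² + w² = 1` shows that `V(p)` is orthogonal to every `DV(p) h`; together with
`tr DV(p) = 0` this forces `DV(p) V⊥(p) = 0`. Hence `V` is constant along an integral curve of
`V⊥`, so the curve has the constant velocity `V⊥(z)`.
-/

section ConvexCurve

variable {E : Type*} [NormedAddCommGroup E] [NormedSpace ℝ E] {f : ℝ → E} {s : Set ℝ}

theorem Convex.eq_of_hasDerivWithinAt_eq_zero (hs : Convex ℝ s)
    (hf : ∀ x ∈ s, HasDerivWithinAt f 0 s x) {x y : ℝ} (hx : x ∈ s) (hy : y ∈ s) :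
    f y = f x := by
  have h := hs.norm_image_sub_le_of_norm_hasDerivWithin_le (C := 0) hf
    (fun _ _ ↦ norm_zero.le) hx hy
  rwa [zero_mul, norm_le_zero_iff, sub_eq_zero] at h

theorem Convex.eq_add_smul_of_hasDerivWithinAt_const (hs : Convex ℝ s) {c : E}
    (hf : ∀ x ∈ s, HasDerivWithinAt f c s x) {x y : ℝ} (hx : x ∈ s) (hy : y ∈ s) :
    f y = f x + (y - x) • c := by
  have hg : ∀ t ∈ s, HasDerivWithinAt (fun t ↦ f t - t • c) 0 s t := fun t ht ↦ by
    simpa using (hf t ht).fun_sub ((hasDerivWithinAt_id t s).smul_const c)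
  have h := hs.eq_of_hasDerivWithinAt_eq_zero hg hx hy
  rw [sub_smul]
  linear_combination (norm := module) h

end ConvexCurve

section UnitField

variable {V : ℝ × ℝ → ℝ × ℝ} {p : ℝ × ℝ}

theorem fderiv_apply_orthogonal_of_unit (hV : DifferentiableAt ℝ V p)
    (hunit : ∀ q, (V q).1 ^ 2 + (V q).2 ^ 2 = 1) (h : ℝ × ℝ) :
    (V p).1 * (fderiv ℝ V p h).1 + (V p).2 * (fderiv ℝ V p h).2 = 0 := by
  have hsq := (hV.hasFDerivAt.fst.pow 2).add (hV.hasFDerivAt.snd.pow 2)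
  have hconst : HasFDerivAt (fun q ↦ (V q).1 ^ 2 + (V q).2 ^ 2) (0 : (ℝ × ℝ) →L[ℝ] ℝ) p := by
    simpa only [hunit] using hasFDerivAt_const (1 : ℝ) p
  have h2 := congrArg (fun φ ↦ φ h) (hsq.unique hconst)
  simp only [Nat.add_one_sub_one, pow_one, nsmul_eq_mul, Nat.cast_ofNat, smul_eq_mul,
    add_apply, smul_apply, ContinuousLinearMap.comp_apply,
    ContinuousLinearMap.coe_fst', ContinuousLinearMap.coe_snd', zero_apply] at h2
  linear_combination h2 / 2

theorem fderiv_apply_perp_eq_zero (hV : DifferentiableAt ℝ V p)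
    (hunit : ∀ q, (V q).1 ^ 2 + (V q).2 ^ 2 = 1)
    (hdiv : (fderiv ℝ V p (1, 0)).1 + (fderiv ℝ V p (0, 1)).2 = 0) :
    fderiv ℝ V p ((V p).2, -(V p).1) = 0 := by
  have e1 := fderiv_apply_orthogonal_of_unit hV hunit (1, 0)
  have e2 := fderiv_apply_orthogonal_of_unit hV hunit (0, 1)
  have hperp : (((V p).2, -(V p).1) : ℝ × ℝ) = (V p).2 • (1, 0) + (-(V p).1) • (0, 1) := by
    simp
  rw [hperp, map_add, map_smul, map_smul]
  ext
  · simp only [Prod.fst_add, Prod.smul_fst, smul_eq_mul, Prod.fst_zero]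
    linear_combination (V p).2 * hdiv - e2
  · simp only [Prod.snd_add, Prod.smul_snd, smul_eq_mul, Prod.snd_zero]
    linear_combination e1 - (V p).1 * hdiv

end UnitField

/-- Integral curves of the perpendicular field V⊥ = (w,-v) of a C¹ unit
divergence-free planar vector field V = (v,w) are straight lines traversed at
unit speed: if L'(r) = V⊥(L(r)) on an interval I ∋ 0 and L(0) = z, then
L(r) = z + r • V⊥(z) for all r ∈ I. -/
theorem stmt_1 (V : ℝ × ℝ → ℝ × ℝ) (hV : ContDiff ℝ 1 V)
    (hunit : ∀ p, (V p).1 ^ 2 + (V p).2 ^ 2 = 1)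
    (hdiv : ∀ p, (fderiv ℝ V p (1, 0)).1 + (fderiv ℝ V p (0, 1)).2 = 0)
    (I : Set ℝ) (hI : Convex ℝ I) (h0I : (0 : ℝ) ∈ I)
    (L : ℝ → ℝ × ℝ) (z : ℝ × ℝ) (hL0 : L 0 = z)
    (hL : ∀ r ∈ I, HasDerivAt L ((V (L r)).2, -(V (L r)).1) r) :
    ∀ r ∈ I, L r = z + r • ((V z).2, -(V z).1) := by
  have hVdiff : Differentiable ℝ V := hV.differentiable one_ne_zero
  have hVL : ∀ r ∈ I, HasDerivWithinAt (V ∘ L) 0 I r := fun r hr ↦ by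
    simpa [fderiv_apply_perp_eq_zero (hVdiff _) hunit (hdiv _)] using
      ((hVdiff (L r)).hasFDerivAt.comp_hasDerivAt r (hL r hr)).hasDerivWithinAt
  have hVconst : ∀ r ∈ I, V (L r) = V z := fun r hr ↦ by
    simpa [hL0] using hI.eq_of_hasDerivWithinAt_eq_zero hVL h0I hr
  have hLvelocity : ∀ r ∈ I, HasDerivWithinAt L ((V z).2, -(V z).1) I r := fun r hr ↦ by
    simpa only [hVconst r hr] using (hL r hr).hasDerivWithinAt
  intro r hr
  simpa [hL0] using hI.eq_add_smul_of_hasDerivWithinAt_const hLvelocity h0I hr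
end

section
/- Let u(s) = u₀ + (2/a)·√(a·s - 1) for s > 1/a, where a > 0. Then u solves the ordinary differential equation 2s·u''(s) + u'(s)·(1 + u'(s)²) = 0 for all s > 1/a. -/
/-!
With `r = √(a s - 1)` one finds `u' = 1 / r` and `u'' = -a / (2 r³)`; since `a s = r² + 1`,
the two terms of the equation are `-(r² + 1) / r³` and `(r² + 1) / r³`.
-/

open Topology

namespace HMinimalProfile

noncomputable def profile (a u₀ : ℝ) (s : ℝ) : ℝ := u₀ + 2 / a * Real.sqrt (a * s - 1)

lemma sub_one_pos_of_inv_lt {a s : ℝ} (ha : 0 < a) (hs : 1 / a < s) : 0 < a * s - 1 := by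
  rw [div_lt_iff₀ ha] at hs
  linarith

lemma hasDerivAt_sqrt_mul_sub (a b : ℝ) {t : ℝ} (ht : 0 < a * t - b) :
    HasDerivAt (fun t => Real.sqrt (a * t - b)) (a / (2 * Real.sqrt (a * t - b))) t := by
  have hlin : HasDerivAt (fun t : ℝ => a * t - b) a t := by
    simpa using ((hasDerivAt_id t).const_mul a).sub_const b
  exact ((Real.hasDerivAt_sqrt ht.ne').comp t hlin).congr_deriv (by ring)

lemma hasDerivAt_profile {a : ℝ} (u₀ : ℝ) (ha : a ≠ 0) {s : ℝ} (hs : 0 < a * s - 1) :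
    HasDerivAt (profile a u₀) (Real.sqrt (a * s - 1))⁻¹ s := by
  have hr : Real.sqrt (a * s - 1) ≠ 0 := (Real.sqrt_pos.mpr hs).ne'
  exact (((hasDerivAt_sqrt_mul_sub a 1 hs).const_mul (2 / a)).const_add u₀).congr_deriv
    (by field_simp)

lemma deriv_profile_eventuallyEq {a : ℝ} (u₀ : ℝ) (ha : 0 < a) {s : ℝ} (hs : 1 / a < s) :
    deriv (profile a u₀) =ᶠ[𝓝 s] fun t => (Real.sqrt (a * t - 1))⁻¹ := by
  filter_upwards [lt_mem_nhds hs] with t ht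
  exact (hasDerivAt_profile u₀ ha.ne' (sub_one_pos_of_inv_lt ha ht)).deriv

lemma deriv_deriv_profile {a : ℝ} (u₀ : ℝ) (ha : 0 < a) {s : ℝ} (hs : 1 / a < s) :
    deriv (deriv (profile a u₀)) s = -a / (2 * Real.sqrt (a * s - 1) ^ 3) := by
  have hpos := sub_one_pos_of_inv_lt ha hs
  have hr : Real.sqrt (a * s - 1) ≠ 0 := (Real.sqrt_pos.mpr hpos).ne'
  rw [(deriv_profile_eventuallyEq u₀ ha hs).deriv_eq]
  exact (((hasDerivAt_sqrt_mul_sub a 1 hpos).inv hr).congr_deriv (by field_simp)).deriv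

lemma ode_lhs_eq_zero_of_sq_eq {a s r : ℝ} (hr : r ≠ 0) (hsq : r ^ 2 = a * s - 1) :
    2 * s * (-a / (2 * r ^ 3)) + r⁻¹ * (1 + r⁻¹ ^ 2) = 0 := by
  field_simp
  linear_combination hsq

end HMinimalProfile

open HMinimalProfile

/-- u(s) = u₀ + (2/a)√(as - 1), a > 0, solves 2s·u'' + u'(1 + (u')²) = 0 for
s > 1/a (the rotationally invariant H-minimal surface equation in ℍ¹). -/
theorem stmt_6 (a u₀ : ℝ) (ha : 0 < a) (u : ℝ → ℝ)
    (hu : u = fun s => u₀ + 2 / a * Real.sqrt (a * s - 1)) :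
    ∀ s : ℝ, 1 / a < s →
      2 * s * deriv (deriv u) s + deriv u s * (1 + (deriv u s) ^ 2) = 0 := by
  intro s hs
  obtain rfl : u = profile a u₀ := hu
  have hpos := sub_one_pos_of_inv_lt ha hs
  rw [deriv_deriv_profile u₀ ha hs, (hasDerivAt_profile u₀ ha.ne' hpos).deriv]
  exact ode_lhs_eq_zero_of_sq_eq (Real.sqrt_pos.mpr hpos).ne' (Real.sq_sqrt hpos.le)
end

section
/- Let x₀, x₁ ∈ ℝ³ and let v₀, v₁ ∈ ℝ³ be unit vectors that are not parallel. Let n be a unit vector, and for i = 0,1 set w_i = v_i - ⟨n, v_i⟩·n (the projections of the line directions onto the plane with normal n). Then w₀ × w₁ = 0 if and only if n lies in the span of v₀ and v₁. -/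
/-!
Write `wᵢ = vᵢ - ⟨n, vᵢ⟩ n`. Expanding `w₀ × w₁` bilinearly and comparing with the vector triple
product `n × (n × (v₀ × v₁)) = ⟨n, v₀ × v₁⟩ n - ⟨n, n⟩ (v₀ × v₁)` shows that for a unit vector `n`
the product `w₀ × w₁` is `⟨n, v₀ × v₁⟩ n`: it is normal to the plane `n⊥`, with `n`-component the
triple product. So `w₀ × w₁ = 0` iff `det (n, v₀, v₁) = 0`, and as `v₀, v₁` are linearly
independent this means `n ∈ span {v₀, v₁}`.
-/

open Matrix

theorem cross_sub_smul_sub_smul {R : Type*} [CommRing R] (n v w : Fin 3 → R) :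
    (v - (n ⬝ᵥ v) • n) ⨯₃ (w - (n ⬝ᵥ w) • n) =
      (n ⬝ᵥ v ⨯₃ w) • n + (1 - n ⬝ᵥ n) • (v ⨯₃ w) := by
  have hnnx := cross_cross_eq_smul_sub_smul' n n (v ⨯₃ w)
  rw [cross_cross_eq_smul_sub_smul' n v w, dotProduct_comm v n] at hnnx
  simp only [map_sub, map_smul, LinearMap.sub_apply, LinearMap.smul_apply, cross_self,
    ← cross_anticomm n v] at hnnx ⊢
  linear_combination (norm := module) hnnx

theorem mem_span_pair_iff_dotProduct_cross_eq_zero {K : Type*} [Field K] {u v : Fin 3 → K}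
    (huv : u ⨯₃ v ≠ 0) (x : Fin 3 → K) :
    x ∈ Submodule.span K {u, v} ↔ x ⬝ᵥ u ⨯₃ v = 0 := by
  rw [crossProduct_ne_zero_iff_linearIndependent] at huv
  have hcons : LinearIndependent K ![x, u, v] ↔ x ∉ Submodule.span K {u, v} := by
    rw [show ![x, u, v] = Fin.cons x ![u, v] from rfl, linearIndependent_finCons,
      Matrix.range_cons, Matrix.range_cons, Matrix.range_empty, Set.union_empty,
      Set.singleton_union]
    exact and_iff_right huv
  rw [triple_product_eq_det, ← not_iff_not, ← hcons, ← ne_eq, ← isUnit_iff_ne_zero]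
  exact linearIndependent_rows_iff_isUnit.trans (isUnit_iff_isUnit_det _)

theorem stmt_14_general (v₀ v₁ n : Fin 3 → ℝ) (hn : n ⬝ᵥ n = 1)
    (hpar : crossProduct v₀ v₁ ≠ 0) :
    crossProduct (v₀ - (n ⬝ᵥ v₀) • n) (v₁ - (n ⬝ᵥ v₁) • n) = 0 ↔
      n ∈ Submodule.span ℝ {v₀, v₁} := by
  have hn₀ : n ≠ 0 := by
    rintro rfl
    simp at hn
  rw [cross_sub_smul_sub_smul, hn, sub_self, zero_smul, add_zero, smul_eq_zero,
    or_iff_left hn₀, mem_span_pair_iff_dotProduct_cross_eq_zero hpar]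

/-- Given non-parallel unit vectors v₀, v₁ in ℝ³ and a unit vector n, the
projections wᵢ = vᵢ - ⟨n,vᵢ⟩n satisfy w₀ × w₁ = 0 iff n ∈ span{v₀, v₁}. -/
theorem stmt_14 (x₀ x₁ v₀ v₁ n : Fin 3 → ℝ)
    (hv₀ : v₀ ⬝ᵥ v₀ = 1) (hv₁ : v₁ ⬝ᵥ v₁ = 1) (hn : n ⬝ᵥ n = 1)
    (hpar : crossProduct v₀ v₁ ≠ 0) :
    crossProduct (v₀ - (n ⬝ᵥ v₀) • n) (v₁ - (n ⬝ᵥ v₁) • n) = 0 ↔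
      n ∈ Submodule.span ℝ {v₀, v₁} :=
  stmt_14_general v₀ v₁ n hn hpar
end
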